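/- For all nonnegative integers n and r, and any complex λ ≠ 1, HB_n^{(ν,k)}(x) = \frac{1}{(1-λ)^r} \sum_{m=0}^{n} \binom{n}{m} \left( \sum_{l=0}^{r} \binom{r}{l} (-λ)^{r-l} HB_{n-m}^{(ν,k)}(l) \right) H_m^{(r)}(x|λ), where H_m^{(r)}(x|λ) are the Frobenius–Euler polynomials of order r. -/

import Mathlib

open PowerSeries Finset

/-- The power series e^{-t} over ℂ. -/
noncomputable def expNegC : PowerSeries ℂ := rescale (-1) (PowerSeries.exp ℂ)

/-- Li_k(1-e^{-t})/(1-e^{-t}) = ∑_{m≥0} (1-e^{-t})^m/(m+1)^k over ℂ. -/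
noncomputable def pbGFC (k : ℤ) : PowerSeries ℂ :=
  PowerSeries.mk fun n => ∑ m ∈ Finset.range (n + 1),
    (1 / ((m : ℂ) + 1) ^ k) * PowerSeries.coeff n ((1 - expNegC) ^ m)

/-- The power series e^{-ν t²/2} over ℂ. -/
noncomputable def hermGFC (ν : ℝ) : PowerSeries ℂ :=
  PowerSeries.mk fun n =>
    if Even n then (-(ν : ℂ) / 2) ^ (n / 2) / (Nat.factorial (n / 2)) else 0

/-- Hermite and poly-Bernoulli mixed-type polynomials over ℂ. -/
noncomputable def HBC (ν : ℝ) (k : ℤ) (n : ℕ) (x : ℂ) : ℂ :=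
  (Nat.factorial n) *
    PowerSeries.coeff n (hermGFC ν * pbGFC k * rescale x (PowerSeries.exp ℂ))

/-- Frobenius–Euler polynomials of order r, via ((1-λ)/(e^t-λ))^r e^{xt}. -/
noncomputable def frobEuler (r : ℕ) (lam : ℂ) (n : ℕ) (x : ℂ) : ℂ :=
  (Nat.factorial n) * PowerSeries.coeff n
    ((PowerSeries.C (1 - lam) * (PowerSeries.exp ℂ - PowerSeries.C lam)⁻¹) ^ r *
      rescale x (PowerSeries.exp ℂ))


/-!
Multiplying the generating function of `HB_n^{(ν,k)}(x)` by
`1 = (1-λ)^{-r} (e^t-λ)^r · ((1-λ)/(e^t-λ))^r` splits it into the product of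
`e^{-νt²/2} Li_k(1-e^{-t})/(1-e^{-t}) (e^t-λ)^r` and the generating function of the
Frobenius–Euler polynomials. Expanding `(e^t-λ)^r = ∑ binom(r,l) (-λ)^{r-l} e^{lt}` shows that
the first factor generates `∑ binom(r,l) (-λ)^{r-l} HB_j^{(ν,k)}(l)`, and comparing coefficients
of the product gives the identity.
-/

namespace PowerSeries

theorem factorial_mul_coeff_mul_eq_sum_choose {R : Type*} [CommSemiring R] (φ ψ : R⟦X⟧)
    (n : ℕ) :
    (n.factorial : R) * coeff n (φ * ψ) =
      ∑ m ∈ range (n + 1), (n.choose m : R) *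
        (((n - m).factorial : R) * coeff (n - m) φ) * ((m.factorial : R) * coeff m ψ) := by
  rw [mul_comm φ ψ, coeff_mul,
    Nat.sum_antidiagonal_eq_sum_range_succ (fun i j => coeff i ψ * coeff j φ), mul_sum]
  refine sum_congr rfl fun m hm => ?_
  have hmn : m ≤ n := Nat.lt_succ_iff.mp (mem_range.mp hm)
  rw [← Nat.choose_mul_factorial_mul_factorial hmn]
  push_cast
  ring

theorem exp_sub_C_pow {A : Type*} [CommRing A] [Algebra ℚ A] (a : A) (r : ℕ) :
    (exp A - C a) ^ r =
      ∑ l ∈ range (r + 1), C ((r.choose l : A) * (-a) ^ (r - l)) * rescale (l : A) (exp A) := by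
  rw [sub_eq_add_neg, ← map_neg C, add_pow]
  refine sum_congr rfl fun l _ => ?_
  rw [exp_pow_eq_rescale_exp, ← map_pow, map_mul, map_natCast C]
  ring

theorem pow_mul_C_mul_inv_pow {k : Type*} [Field k] {φ : k⟦X⟧} (hφ : constantCoeff φ ≠ 0)
    (c : k) (r : ℕ) :
    φ ^ r * (C c * φ⁻¹) ^ r = C (c ^ r) := by
  rw [← mul_pow, mul_left_comm, PowerSeries.mul_inv_cancel φ hφ, mul_one, map_pow]

end PowerSeries

theorem sum_choose_mul_HBC_natCast (ν : ℝ) (k : ℤ) (lam : ℂ) (r j : ℕ) :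
    ∑ l ∈ range (r + 1), (r.choose l : ℂ) * (-lam) ^ (r - l) * HBC ν k j l =
      (j.factorial : ℂ) * coeff j (hermGFC ν * pbGFC k * (exp ℂ - C lam) ^ r) := by
  rw [exp_sub_C_pow, mul_sum, map_sum, mul_sum]
  refine sum_congr rfl fun l _ => ?_
  rw [HBC, mul_left_comm _ (C _), coeff_C_mul]
  ring

theorem HB_eq_sum_frobeniusEuler_general (ν : ℝ) (k : ℤ) (n r : ℕ)
    (lam : ℂ) (hlam : lam ≠ 1) (x : ℂ) :
    HBC ν k n x = (1 / (1 - lam) ^ r) * ∑ m ∈ Finset.range (n + 1),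
      (n.choose m : ℂ) *
        (∑ l ∈ Finset.range (r + 1), (r.choose l : ℂ) * (-lam) ^ (r - l) * HBC ν k (n - m) l) *
        frobEuler r lam m x := by
  have h_one_sub : (1 : ℂ) - lam ≠ 0 := sub_ne_zero.mpr hlam.symm
  have hP : constantCoeff (exp ℂ - C lam) ≠ 0 := by simpa using h_one_sub
  have hsplit : ∀ G : ℂ⟦X⟧, (G * (exp ℂ - C lam) ^ r) *
      ((C (1 - lam) * (exp ℂ - C lam)⁻¹) ^ r * rescale x (exp ℂ)) =
        C ((1 - lam) ^ r) * (G * rescale x (exp ℂ)) := fun G => by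
    rw [← pow_mul_C_mul_inv_pow hP]
    ring
  simp_rw [sum_choose_mul_HBC_natCast, frobEuler]
  rw [← factorial_mul_coeff_mul_eq_sum_choose, hsplit, coeff_C_mul, HBC]
  field_simp

theorem HB_eq_sum_frobeniusEuler (ν : ℝ) (hν : ν ≠ 0) (k : ℤ) (n r : ℕ)
    (lam : ℂ) (hlam : lam ≠ 1) (x : ℂ) :
    HBC ν k n x = (1 / (1 - lam) ^ r) * ∑ m ∈ Finset.range (n + 1),
      (n.choose m : ℂ) *
        (∑ l ∈ Finset.range (r + 1), (r.choose l : ℂ) * (-lam) ^ (r - l) * HBC ν k (n - m) l) *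
        frobEuler r lam m x :=
  HB_eq_sum_frobeniusEuler_general ν k n r lam hlam x
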